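/- Let f := ‖μ_ℂ‖². Then for every (x,y) ∈ ℂᴺ × ℂᴺ the gradient satisfies ‖∇f(x,y)‖² = 4·Σ_{j=1}^{N} (|x_j|² + |y_j|²)·|⟪u_j, μ_ℂ(x,y)⟫|², where ⟪u_j, μ_ℂ(x,y)⟫ denotes the standard Hermitian inner product on ℂᴺ. -/

import Mathlib

noncomputable section

/-- `T*ℂᴺ = ℂᴺ × ℂᴺ` with its L² (Hermitian) norm. -/
abbrev HypPhase (N : ℕ) := WithLp 2 (EuclideanSpace ℂ (Fin N) × EuclideanSpace ℂ (Fin N))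

/-- The inclusion `ℝᴺ ⊆ ℂᴺ`. -/
def toC {N : ℕ} (v : EuclideanSpace ℝ (Fin N)) : EuclideanSpace ℂ (Fin N) :=
  (WithLp.equiv 2 (Fin N → ℂ)).symm fun i => ((WithLp.equiv 2 (Fin N → ℝ) v) i : ℂ)

/-! The gradient of `‖μ‖²` is `2 (Dμ)* μ`; for the moment map `μ(x, y) = ∑ⱼ xⱼ yⱼ wⱼ - β`
the adjoint of its (holomorphic) derivative sends `z` to `(cⱼ ȳⱼ, cⱼ x̄ⱼ)ⱼ` with
`cⱼ = ⟪wⱼ, z⟫`, whose squared norm is `∑ⱼ (|xⱼ|² + |yⱼ|²) |cⱼ|²`. -/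

open ComplexConjugate

theorem hasGradientAt_norm_sq_of_hasFDerivAt {E F : Type*} [NormedAddCommGroup E]
    [InnerProductSpace ℝ E] [CompleteSpace E] [NormedAddCommGroup F] [InnerProductSpace ℝ F]
    {μ : E → F} {L : E →L[ℝ] F} {p g : E} (hμ : HasFDerivAt μ L p)
    (hg : ∀ v, inner ℝ g v = inner ℝ (μ p) (L v)) :
    HasGradientAt (fun q => ‖μ q‖ ^ 2) ((2 : ℝ) • g) p := by
  rw [hasGradientAt_iff_hasFDerivAt]
  refine hμ.norm_sq.congr_fderiv (ContinuousLinearMap.ext fun v => ?_)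
  simp [hg]

/- The real inner products on these spaces are built coordinatewise, not through
`Inner.rclikeToReal`, so `real_inner_eq_re_inner` does not apply to them directly. -/
theorem EuclideanSpace.real_inner_eq_re_inner {ι : Type*} [Fintype ι]
    (x y : EuclideanSpace ℂ ι) : inner ℝ x y = (inner ℂ x y).re := by
  simp [PiLp.inner_apply, Complex.re_sum]

theorem WithLp.prod_real_inner_eq_re_inner {ι : Type*} [Fintype ι]
    (x y : WithLp 2 (EuclideanSpace ℂ ι × EuclideanSpace ℂ ι)) :
    inner ℝ x y = (inner ℂ x y).re := by
  rw [WithLp.prod_inner_apply, WithLp.prod_inner_apply, Complex.add_re,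
    EuclideanSpace.real_inner_eq_re_inner, EuclideanSpace.real_inner_eq_re_inner]

section ComplexMomentMap

variable {ι V : Type*} [Fintype ι] [NormedAddCommGroup V] [InnerProductSpace ℂ V]

def complexMomentMap (w : ι → V) (β : V)
    (p : WithLp 2 (EuclideanSpace ℂ ι × EuclideanSpace ℂ ι)) : V :=
  (∑ j, (p.ofLp.1 j * p.ofLp.2 j) • w j) - β

def complexMomentMapDeriv (w : ι → V) (p : WithLp 2 (EuclideanSpace ℂ ι × EuclideanSpace ℂ ι)) :
    WithLp 2 (EuclideanSpace ℂ ι × EuclideanSpace ℂ ι) →L[ℂ] V :=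
  ∑ j, (p.ofLp.1 j • (EuclideanSpace.proj j).comp (WithLp.sndL 2 ℂ _ _) +
    p.ofLp.2 j • (EuclideanSpace.proj j).comp (WithLp.fstL 2 ℂ _ _)).smulRight (w j)

def complexMomentMapDerivAdjoint (w : ι → V)
    (p : WithLp 2 (EuclideanSpace ℂ ι × EuclideanSpace ℂ ι)) (z : V) :
    WithLp 2 (EuclideanSpace ℂ ι × EuclideanSpace ℂ ι) :=
  WithLp.toLp 2 (WithLp.toLp 2 fun j => inner ℂ (w j) z * conj (p.ofLp.2 j),
    WithLp.toLp 2 fun j => inner ℂ (w j) z * conj (p.ofLp.1 j))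

variable (w : ι → V) (β z : V) (p v : WithLp 2 (EuclideanSpace ℂ ι × EuclideanSpace ℂ ι))

theorem complexMomentMapDeriv_apply :
    complexMomentMapDeriv w p v = ∑ j, (p.ofLp.1 j * v.ofLp.2 j + p.ofLp.2 j * v.ofLp.1 j) • w j := by
  simp [complexMomentMapDeriv]

theorem hasFDerivAt_complexMomentMap :
    HasFDerivAt (complexMomentMap w β) (complexMomentMapDeriv w p) p := by
  have hcoord := fun j =>
    ((EuclideanSpace.proj j).comp (WithLp.fstL 2 ℂ _ _)).hasFDerivAt.mul (x := p)
      ((EuclideanSpace.proj j).comp (WithLp.sndL 2 ℂ _ _)).hasFDerivAt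
  exact (HasFDerivAt.fun_sum fun j _ => (hcoord j).smul_const (w j)).sub_const β

theorem inner_complexMomentMapDerivAdjoint :
    inner ℂ (complexMomentMapDerivAdjoint w p z) v = inner ℂ z (complexMomentMapDeriv w p v) := by
  simp only [complexMomentMapDerivAdjoint, complexMomentMapDeriv_apply, WithLp.prod_inner_apply,
    PiLp.inner_apply, RCLike.inner_apply, inner_sum, inner_smul_right, ← Finset.sum_add_distrib]
  refine Finset.sum_congr rfl fun j _ => ?_
  rw [← inner_conj_symm z]
  simp only [map_mul, Complex.conj_conj]
  ring

theorem norm_sq_complexMomentMapDerivAdjoint :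
    ‖complexMomentMapDerivAdjoint w p z‖ ^ 2 =
      ∑ j, (‖p.ofLp.1 j‖ ^ 2 + ‖p.ofLp.2 j‖ ^ 2) * ‖inner ℂ (w j) z‖ ^ 2 := by
  simp only [complexMomentMapDerivAdjoint, WithLp.prod_norm_sq_eq_of_L2, EuclideanSpace.norm_sq_eq,
    ← Finset.sum_add_distrib, WithLp.toLp_fst, WithLp.toLp_snd, norm_mul, RCLike.norm_conj]
  exact Finset.sum_congr rfl fun j _ => by ring

end ComplexMomentMap

theorem hasGradientAt_norm_sq_complexMomentMap {ι κ : Type*} [Fintype ι] [Fintype κ]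
    (w : ι → EuclideanSpace ℂ κ) (β : EuclideanSpace ℂ κ)
    (p : WithLp 2 (EuclideanSpace ℂ ι × EuclideanSpace ℂ ι)) :
    HasGradientAt (fun q => ‖complexMomentMap w β q‖ ^ 2)
      ((2 : ℝ) • complexMomentMapDerivAdjoint w p (complexMomentMap w β p)) p := by
  refine hasGradientAt_norm_sq_of_hasFDerivAt
    ((hasFDerivAt_complexMomentMap w β p).restrictScalars ℝ) fun v => ?_
  rw [WithLp.prod_real_inner_eq_re_inner, EuclideanSpace.real_inner_eq_re_inner,
    inner_complexMomentMapDerivAdjoint]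
  rfl

theorem stmt8_general (N : ℕ)
    (u : Fin N → EuclideanSpace ℝ (Fin N))
    (β : EuclideanSpace ℂ (Fin N))
    (μC : HypPhase N → EuclideanSpace ℂ (Fin N))
    (hμC : ∀ p : HypPhase N, μC p = (∑ j, (p.ofLp.1 j * p.ofLp.2 j) • toC (u j)) - β)
    (f : HypPhase N → ℝ) (hf : ∀ p, f p = ‖μC p‖ ^ 2) :
    ∀ p : HypPhase N,
      ‖gradient f p‖ ^ 2
        = 4 * ∑ j, (‖p.ofLp.1 j‖ ^ 2 + ‖p.ofLp.2 j‖ ^ 2) * ‖(inner ℂ (toC (u j)) (μC p) : ℂ)‖ ^ 2 := by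
  intro p
  obtain rfl : μC = complexMomentMap (fun j => toC (u j)) β := funext hμC
  obtain rfl : f = fun q => ‖complexMomentMap (fun j => toC (u j)) β q‖ ^ 2 := funext hf
  rw [(hasGradientAt_norm_sq_complexMomentMap _ β p).gradient, norm_smul, mul_pow,
    norm_sq_complexMomentMapDerivAdjoint]
  norm_num

/-- Explicit formula for the norm of the gradient of the norm-square of
the complex moment map of a linear torus action on `T*ℂᴺ`. -/
theorem stmt8 (N : ℕ) (𝔱 : Submodule ℝ (EuclideanSpace ℝ (Fin N)))
    (u : Fin N → EuclideanSpace ℝ (Fin N))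
    (hu : ∀ j, u j = (𝔱.orthogonalProjectionOnto (EuclideanSpace.single j 1) :
      EuclideanSpace ℝ (Fin N)))
    (β : EuclideanSpace ℂ (Fin N))
    (hβ : β ∈ Submodule.span ℂ (toC '' (𝔱 : Set (EuclideanSpace ℝ (Fin N)))))
    (μC : HypPhase N → EuclideanSpace ℂ (Fin N))
    (hμC : ∀ p : HypPhase N, μC p = (∑ j, (p.ofLp.1 j * p.ofLp.2 j) • toC (u j)) - β)
    (f : HypPhase N → ℝ) (hf : ∀ p, f p = ‖μC p‖ ^ 2) :
    ∀ p : HypPhase N,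
      ‖gradient f p‖ ^ 2
        = 4 * ∑ j, (‖p.ofLp.1 j‖ ^ 2 + ‖p.ofLp.2 j‖ ^ 2) * ‖(inner ℂ (toC (u j)) (μC p) : ℂ)‖ ^ 2 :=
  stmt8_general N u β μC hμC f hf
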